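/- arXiv:1805.07111 — 6 statements merged into one kernel-verified Lean document; each statement's English description precedes it below -/
import Mathlib

section
/- If c = d = 0 and a ≠ 0 and b ≠ 0, then V has the unique fixed point (0,0,1) in S², and for every (x,y,z) ∈ S², V^n(x,y,z) → (0,0,1) as n → ∞. -/
/-! With `c = d = 0` the first two coordinates are multiplied by `1 - b` and `1 - a` at every step
while the coordinate sum is preserved; as `|1 - a|, |1 - b| < 1`, the iterates of `(x, y, z)` tend
to `(0, 0, x + y + z)`. -/

open Filter Topology

noncomputable def V (a b c d : ℝ) (p : ℝ × ℝ × ℝ) : ℝ × ℝ × ℝ :=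
  (p.1 * (1 - b + d * p.2.1),
   p.2.1 * (1 - a - d * p.1 + c * p.2.2),
   p.2.2 * (1 - c * p.2.1) + a * p.2.1 + b * p.1)

def S2 : Set (ℝ × ℝ × ℝ) :=
  {p | 0 ≤ p.1 ∧ 0 ≤ p.2.1 ∧ 0 ≤ p.2.2 ∧ p.1 + p.2.1 + p.2.2 = 1}

lemma V_zero_zero_iterate (a b : ℝ) (p : ℝ × ℝ × ℝ) (n : ℕ) :
    (V a b 0 0)^[n] p =
      (p.1 * (1 - b) ^ n, p.2.1 * (1 - a) ^ n,
        p.1 + p.2.1 + p.2.2 - p.1 * (1 - b) ^ n - p.2.1 * (1 - a) ^ n) := by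
  induction n with
  | zero => ext <;> simp; ring
  | succ n ih =>
    rw [Function.iterate_succ_apply', ih]
    simp only [V, Prod.mk.injEq]
    refine ⟨by ring, by ring, by ring⟩

lemma V_zero_zero_eq_self_iff {a b : ℝ} (ha : a ≠ 0) (hb : b ≠ 0) (p : ℝ × ℝ × ℝ) :
    V a b 0 0 p = p ↔ p.1 = 0 ∧ p.2.1 = 0 := by
  obtain ⟨x, y, z⟩ := p
  simp only [V, Prod.mk.injEq]
  constructor
  · rintro ⟨hx, hy, -⟩
    have hxb : x * b = 0 := by linarith
    have hya : y * a = 0 := by linarith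
    exact ⟨(mul_eq_zero.mp hxb).resolve_right hb, (mul_eq_zero.mp hya).resolve_right ha⟩
  · rintro ⟨rfl, rfl⟩
    simp

lemma tendsto_one_sub_pow_atTop_nhds_zero {c : ℝ} (h0 : 0 < c) (h2 : c < 2) :
    Tendsto (fun n : ℕ => (1 - c) ^ n) atTop (𝓝 0) :=
  tendsto_pow_atTop_nhds_zero_of_abs_lt_one (abs_lt.mpr ⟨by linarith, by linarith⟩)

lemma tendsto_V_zero_zero_iterate {a b : ℝ} (ha0 : 0 < a) (ha2 : a < 2) (hb0 : 0 < b)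
    (hb2 : b < 2) (p : ℝ × ℝ × ℝ) :
    Tendsto (fun n => (V a b 0 0)^[n] p) atTop (𝓝 (0, 0, p.1 + p.2.1 + p.2.2)) := by
  set f : ℝ × ℝ → ℝ × ℝ × ℝ := fun q =>
    (p.1 * q.1, p.2.1 * q.2, p.1 + p.2.1 + p.2.2 - p.1 * q.1 - p.2.1 * q.2)
  have hf : Continuous f := by fun_prop
  have hpow : Tendsto (fun n : ℕ => ((1 - b) ^ n, (1 - a) ^ n)) atTop (𝓝 (0, 0)) :=
    (tendsto_one_sub_pow_atTop_nhds_zero hb0 hb2).prodMk_nhds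
      (tendsto_one_sub_pow_atTop_nhds_zero ha0 ha2)
  have hlim := (hf.tendsto (0, 0)).comp hpow
  simp only [f, mul_zero, sub_zero] at hlim
  simp only [V_zero_zero_iterate]
  exact hlim

theorem stmt3 (a b : ℝ) (ha0 : 0 < a) (ha1 : a ≤ 1) (hb0 : 0 < b) (hb1 : b ≤ 1) :
    {p ∈ S2 | V a b 0 0 p = p} = {((0 : ℝ), (0 : ℝ), (1 : ℝ))} ∧
    ∀ p ∈ S2, Tendsto (fun n => (V a b 0 0)^[n] p) atTop
      (𝓝 ((0 : ℝ), (0 : ℝ), (1 : ℝ))) := by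
  constructor
  · ext ⟨x, y, z⟩
    simp only [S2, Set.mem_ofPred_eq, V_zero_zero_eq_self_iff ha0.ne' hb0.ne',
      Set.mem_singleton_iff, Prod.mk.injEq]
    constructor
    · rintro ⟨⟨-, -, -, hsum⟩, rfl, rfl⟩
      exact ⟨rfl, rfl, by linarith⟩
    · rintro ⟨rfl, rfl, rfl⟩
      norm_num
  · rintro p ⟨-, -, -, hsum⟩
    simpa only [hsum] using
      tendsto_V_zero_zero_iterate ha0 (by linarith) hb0 (by linarith) p
end

section
/- For d ∈ [-1,1] and z ∈ [0,1], the map f(x) = x(1+d(1-x-z)) on [0,1] has no periodic points of period two other than its fixed points; equivalently, the quadratic equation obtained from (f(f(x))-x)/(f(x)-x) = 0 has negative discriminant d²(z-1)² - 4 < 0. -/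
open Filter Topology

/-! Write `f x = x * (c - d * x)` with `c = 1 + d * (1 - z)`. Then
`f (f x) - x = (f x - x) * (1 + (1 - d * x) * (c - d * x))`, and the second factor is the quadratic
`d² x² - d (c + 1) x + (c + 1)` whose discriminant is `d² (d² (z - 1)² - 4)`. For `x ∈ [0,1]` both
`1 - d * x` and `c - d * x = 1 - d * (x + z - 1)` are products `1 - d * t` with `|d|, |t| ≤ 1`,
hence nonnegative, so the second factor is positive and a solution of `f (f x) = x` is a fixed
point. -/

lemma abs_mul_le_one {d t : ℝ} (hd : |d| ≤ 1) (ht : |t| ≤ 1) : |d * t| ≤ 1 := by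
  rw [abs_mul]
  exact mul_le_one₀ hd (abs_nonneg t) ht

lemma one_sub_mul_nonneg_of_abs_le_one {d t : ℝ} (hd : |d| ≤ 1) (ht : |t| ≤ 1) :
    0 ≤ 1 - d * t := by
  linarith [le_abs_self (d * t), abs_mul_le_one hd ht]

lemma comp_self_sub_of_eq_mul_sub {f : ℝ → ℝ} {c d : ℝ} (hf : ∀ x, f x = x * (c - d * x))
    (x : ℝ) : f (f x) - x = (f x - x) * (1 + (1 - d * x) * (c - d * x)) := by
  rw [hf (f x), hf x]
  ring

lemma eq_of_comp_self_eq_of_eq_mul_sub {f : ℝ → ℝ} {c d x : ℝ}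
    (hf : ∀ x, f x = x * (c - d * x)) (hx : 0 < 1 + (1 - d * x) * (c - d * x))
    (hfx : f (f x) = x) : f x = x := by
  have h := comp_self_sub_of_eq_mul_sub hf x
  rw [hfx, sub_self, eq_comm, mul_eq_zero] at h
  exact sub_eq_zero.mp (h.resolve_right hx.ne')

theorem stmt5 (d z : ℝ) (hd1 : -1 ≤ d) (hd2 : d ≤ 1) (hz0 : 0 ≤ z) (hz1 : z ≤ 1)
    (f : ℝ → ℝ) (hf : ∀ x, f x = x * (1 + d * (1 - x - z))) :
    d ^ 2 * (z - 1) ^ 2 - 4 < 0 ∧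
    ∀ x ∈ Set.Icc (0 : ℝ) 1, f (f x) = x → f x = x := by
  have hd : |d| ≤ 1 := abs_le.mpr ⟨hd1, hd2⟩
  constructor
  · have h : (d * (z - 1)) ^ 2 ≤ 1 :=
      sq_le_one_iff_abs_le_one _ |>.mpr (abs_mul_le_one hd (abs_le.mpr ⟨by linarith, by linarith⟩))
    linarith [mul_pow d (z - 1) 2]
  · rintro x ⟨hx0, hx1⟩ hfx
    have hf' : ∀ y, f y = y * ((1 + d * (1 - z)) - d * y) := fun y => by rw [hf y]; ring
    have h₁ : 0 ≤ 1 - d * x :=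
      one_sub_mul_nonneg_of_abs_le_one hd (abs_le.mpr ⟨by linarith, hx1⟩)
    have h₂ : 0 ≤ 1 - d * (x + z - 1) :=
      one_sub_mul_nonneg_of_abs_le_one hd (abs_le.mpr ⟨by linarith, by linarith⟩)
    refine eq_of_comp_self_eq_of_eq_mul_sub hf' ?_ hfx
    have h₃ : (1 + d * (1 - z)) - d * x = 1 - d * (x + z - 1) := by ring
    rw [h₃]
    positivity
end

section
/- If a = b = c = 0 and 0 < d ≤ 1, then for any initial point (x,y,z) ∈ S² with x > 0, the iterates V^n(x,y,z) converge to (1-z, 0, z). -/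
open Filter Topology

/-! With `a = b = c = 0` the coordinate `x + y` is conserved, `x` never decreases, and `y` is
multiplied at each step by `1 - d x ≤ 1 - d x₀ < 1`; so `y` decays geometrically to `0` and
all the mass of `x + y = 1 - z` ends up in `x`. -/

lemma V_zero (d : ℝ) (p : ℝ × ℝ × ℝ) :
    V 0 0 0 d p = (p.1 * (1 + d * p.2.1), p.2.1 * (1 - d * p.1), p.2.2) := by
  simp only [V]
  ring_nf

lemma V_zero_fst_add_snd (d : ℝ) (p : ℝ × ℝ × ℝ) :
    (V 0 0 0 d p).1 + (V 0 0 0 d p).2.1 = p.1 + p.2.1 := by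
  rw [V_zero]
  ring

lemma V_zero_iterate_snd_snd (d : ℝ) (p : ℝ × ℝ × ℝ) (n : ℕ) :
    ((V 0 0 0 d)^[n] p).2.2 = p.2.2 := by
  induction n with
  | zero => rfl
  | succ n ih => rw [Function.iterate_succ_apply', V_zero, ih]

lemma mul_fst_le_one_of_mem_S2 {d : ℝ} (hd1 : d ≤ 1) {p : ℝ × ℝ × ℝ} (hp : p ∈ S2) :
    d * p.1 ≤ 1 := by
  obtain ⟨hx, hy, hz, hsum⟩ := hp
  rcases le_total 0 d with hd0 | hd0
  · nlinarith
  · nlinarith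

lemma mapsTo_V_zero_S2 {d : ℝ} (hd0 : 0 ≤ d) (hd1 : d ≤ 1) :
    Set.MapsTo (V 0 0 0 d) S2 S2 := by
  intro p hp
  have hdx := mul_fst_le_one_of_mem_S2 hd1 hp
  obtain ⟨hx, hy, hz, hsum⟩ := hp
  have hsum' := V_zero_fst_add_snd d p
  rw [V_zero] at hsum' ⊢
  exact ⟨by positivity, mul_nonneg hy (by linarith), hz, by linarith⟩

lemma fst_le_V_zero_fst {d : ℝ} (hd0 : 0 ≤ d) {p : ℝ × ℝ × ℝ} (hp : p ∈ S2) :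
    p.1 ≤ (V 0 0 0 d p).1 := by
  obtain ⟨hx, hy, -, -⟩ := hp
  rw [V_zero]
  nlinarith [mul_nonneg hx (mul_nonneg hd0 hy)]

lemma V_zero_snd_le {d : ℝ} (hd0 : 0 ≤ d) {x₀ : ℝ} {p : ℝ × ℝ × ℝ} (hp : p ∈ S2)
    (hx : x₀ ≤ p.1) : (V 0 0 0 d p).2.1 ≤ (1 - d * x₀) * p.2.1 := by
  rw [V_zero]
  dsimp only
  rw [mul_comm]
  exact mul_le_mul_of_nonneg_right (sub_le_sub_left (mul_le_mul_of_nonneg_left hx hd0) 1) hp.2.1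

lemma V_zero_iterate_mem_S2 {d : ℝ} (hd0 : 0 ≤ d) (hd1 : d ≤ 1) {p : ℝ × ℝ × ℝ}
    (hp : p ∈ S2) (n : ℕ) : (V 0 0 0 d)^[n] p ∈ S2 :=
  (mapsTo_V_zero_S2 hd0 hd1).iterate n hp

lemma monotone_V_zero_iterate_fst {d : ℝ} (hd0 : 0 ≤ d) (hd1 : d ≤ 1) {p : ℝ × ℝ × ℝ}
    (hp : p ∈ S2) : Monotone fun n => ((V 0 0 0 d)^[n] p).1 :=
  monotone_nat_of_le_succ fun n => by
    simpa only [Function.iterate_succ_apply'] using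
      fst_le_V_zero_fst hd0 (V_zero_iterate_mem_S2 hd0 hd1 hp n)

lemma V_zero_iterate_snd_le {d : ℝ} (hd0 : 0 ≤ d) (hd1 : d ≤ 1) {p : ℝ × ℝ × ℝ}
    (hp : p ∈ S2) (n : ℕ) : ((V 0 0 0 d)^[n] p).2.1 ≤ (1 - d * p.1) ^ n * p.2.1 := by
  induction n with
  | zero => simp
  | succ n ih =>
    calc ((V 0 0 0 d)^[n + 1] p).2.1 ≤ (1 - d * p.1) * ((V 0 0 0 d)^[n] p).2.1 := by
          rw [Function.iterate_succ_apply']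
          exact V_zero_snd_le hd0 (V_zero_iterate_mem_S2 hd0 hd1 hp n)
            (monotone_V_zero_iterate_fst hd0 hd1 hp (Nat.zero_le n))
      _ ≤ (1 - d * p.1) * ((1 - d * p.1) ^ n * p.2.1) := by
          gcongr
          exact sub_nonneg.2 (mul_fst_le_one_of_mem_S2 hd1 hp)
      _ = (1 - d * p.1) ^ (n + 1) * p.2.1 := by ring

theorem stmt6 (d : ℝ) (hd0 : 0 < d) (hd1 : d ≤ 1) (p : ℝ × ℝ × ℝ) (hp : p ∈ S2)
    (hx : 0 < p.1) :
    Tendsto (fun n => (V 0 0 0 d)^[n] p) atTop (𝓝 (1 - p.2.2, 0, p.2.2)) := by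
  set q : ℕ → ℝ × ℝ × ℝ := fun n => (V 0 0 0 d)^[n] p
  have hqS2 (n : ℕ) : q n ∈ S2 := V_zero_iterate_mem_S2 hd0.le hd1 hp n
  have hr0 : 0 ≤ 1 - d * p.1 := sub_nonneg.2 (mul_fst_le_one_of_mem_S2 hd1 hp)
  have hr1 : 1 - d * p.1 < 1 := by linarith [mul_pos hd0 hx]
  have hy : Tendsto (fun n => (q n).2.1) atTop (𝓝 0) := by
    refine squeeze_zero (fun n => (hqS2 n).2.1) (V_zero_iterate_snd_le hd0.le hd1 hp) ?_
    simpa using (tendsto_pow_atTop_nhds_zero_of_lt_one hr0 hr1).mul_const p.2.1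
  have hq_eq (n : ℕ) : q n = (1 - p.2.2 - (q n).2.1, (q n).2.1, p.2.2) := by
    have hz := V_zero_iterate_snd_snd d p n
    have hsum := (hqS2 n).2.2.2
    ext <;> simp only [q] at * <;> linarith
  rw [funext hq_eq]
  simpa using ((tendsto_const_nhds (x := 1 - p.2.2)).sub hy).prodMk_nhds
    (hy.prodMk_nhds tendsto_const_nhds)
end

section
/- If d = 0, b ≠ 0 and a < c, then the set H = {(x,y,z) ∈ S² : z > a/c} is invariant under V, i.e. V(H) ⊆ H. -/
/-! Write `p = (x, y, z)`. The map `V` preserves `x + y + z`, and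
`c z' - a = (c z - a)(1 - c y) + b c x` for the new third coordinate `z'`. On `S²` with
`a < c z` and `c ≤ 1 + a` we have `c y < 1`, so both terms are nonnegative and the first is
positive: `a < c z'` again. -/

open Filter Topology

section

variable {a b c : ℝ} {p : ℝ × ℝ × ℝ}

lemma V_sum (a b c d : ℝ) (p : ℝ × ℝ × ℝ) :
    (V a b c d p).1 + (V a b c d p).2.1 + (V a b c d p).2.2 = p.1 + p.2.1 + p.2.2 := by
  simp only [V]
  ring

lemma mul_V_third_sub (a b c d : ℝ) (p : ℝ × ℝ × ℝ) :
    c * (V a b c d p).2.2 - a = (c * p.2.2 - a) * (1 - c * p.2.1) + b * c * p.1 := by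
  simp only [V]
  ring

lemma mul_snd_lt_one_of_mem_S2 (hp : p ∈ S2) (hz : a < c * p.2.2) (hc : c ≤ 1 + a) :
    c * p.2.1 < 1 := by
  obtain ⟨hx, hy, -, hsum⟩ := hp
  rcases le_or_gt 0 c with hc0 | hc0
  · nlinarith
  · nlinarith

theorem mapsTo_V_zero (ha : 0 ≤ a) (hb0 : 0 ≤ b) (hb1 : b ≤ 1) (hc : c ≤ 1 + a) :
    Set.MapsTo (V a b c 0) {p ∈ S2 | a < c * p.2.2} {p ∈ S2 | a < c * p.2.2} := by
  rintro p ⟨hp, hz⟩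
  have hcy := mul_snd_lt_one_of_mem_S2 hp hz hc
  obtain ⟨hx, hy, hz0, hsum⟩ := hp
  have hc0 : 0 < c := pos_of_mul_pos_left (ha.trans_lt hz) hz0
  have hz' : a < c * (V a b c 0 p).2.2 := by
    have := mul_V_third_sub a b c 0 p
    nlinarith [mul_pos (sub_pos.mpr hz) (sub_pos.mpr hcy), mul_nonneg (mul_nonneg hb0 hc0.le) hx]
  refine ⟨⟨?_, ?_, ?_, V_sum a b c 0 p ▸ hsum⟩, hz'⟩ <;> simp only [V] at hz' ⊢
  · nlinarith
  · nlinarith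
  · nlinarith

end

theorem stmt10_general (a b c : ℝ) (ha0 : 0 ≤ a) (hb0 : 0 < b) (hb1 : b ≤ 1)
    (hac : a < c) (hc : c ≤ 1 + a) :
    Set.MapsTo (V a b c 0) {p ∈ S2 | a / c < p.2.2} {p ∈ S2 | a / c < p.2.2} := by
  have hc0 : 0 < c := ha0.trans_lt hac
  have hH : {p ∈ S2 | a / c < p.2.2} = {p ∈ S2 | a < c * p.2.2} := by
    simp only [div_lt_iff₀' hc0]
  rw [hH]
  exact mapsTo_V_zero ha0 hb0.le hb1 hc

theorem stmt10 (a b c : ℝ) (ha0 : 0 ≤ a) (ha1 : a ≤ 1) (hb0 : 0 < b) (hb1 : b ≤ 1)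
    (hac : a < c) (hc : c ≤ 1 + a) :
    Set.MapsTo (V a b c 0) {p ∈ S2 | a / c < p.2.2} {p ∈ S2 | a / c < p.2.2} :=
  stmt10_general a b c ha0 hb0 hb1 hac hc
end

section
/- For the map W(x,y) = (x(1-b+dy), y(1-a+c-(c+d)x-cy)) with c > 0, c ≥ a, a ≠ c, the fixed point (0, (c-a)/c) is attracting if b > d(1-a/c) and a saddle if b < d(1-a/c). -/
open Filter Topology

/-!
Both eigenvalues are real. The second is `1 - (c - a)` with `0 < c - a ≤ 1`, hence in `(-1, 1)`.
The first is `1 - b + d t` with `t = 1 - a / c ∈ [0, 1]`, so `d t` lies between `0` and `d`,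
hence `d t ≥ b - 1` and the eigenvalue is at least `0 > -1`; whether it is below or above `1` is
exactly the sign of `b - d t`.
-/

open Set

lemma abs_one_sub_lt_one {s : ℝ} (hs0 : 0 < s) (hs2 : s < 2) : |1 - s| < 1 := by
  rw [abs_lt]
  constructor <;> linarith

lemma one_sub_div_mem_Icc {a c : ℝ} (ha : 0 ≤ a) (hac : a ≤ c) : 1 - a / c ∈ Icc 0 1 := by
  have h0 : 0 ≤ a / c := div_nonneg ha (ha.trans hac)
  have h1 : a / c ≤ 1 := div_le_one_of_le₀ hac (ha.trans hac)
  constructor <;> linarith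

lemma min_zero_le_mul {d t : ℝ} (ht : t ∈ Icc 0 1) : min 0 d ≤ d * t := by
  rcases le_total 0 d with hd | hd
  · exact (min_le_left _ _).trans (mul_nonneg hd ht.1)
  · exact (min_le_right _ _).trans (le_mul_of_le_one_right hd ht.2)

lemma abs_one_sub_add_mul_lt_one {b d t : ℝ} (hb : b ≤ 1) (hd : b - 1 ≤ d) (ht : t ∈ Icc 0 1)
    (h : d * t < b) : |1 - b + d * t| < 1 := by
  have hlow : min 0 d ≤ d * t := min_zero_le_mul ht
  have : b - 1 ≤ min 0 d := le_min (by linarith) hd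
  rw [abs_lt]
  constructor <;> linarith

theorem stmt15_general (a b c d : ℝ) (ha0 : 0 ≤ a) (hb1 : b ≤ 1)
    (hac : a < c) (hc : c ≤ 1 + a) (hd1 : -(1 - b) ≤ d) :
    (d * (1 - a / c) < b →
      |1 - b + (c - a) * d / c| < 1 ∧ |1 + a - c| < 1) ∧
    (b < d * (1 - a / c) →
      1 < |1 - b + (c - a) * d / c| ∧ |1 + a - c| < 1) := by
  have hc0 : c ≠ 0 := (ha0.trans_lt hac).ne'
  have hfirst : (c - a) * d / c = d * (1 - a / c) := by field_simp
  have hsecond : |1 + a - c| < 1 := by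
    rw [show 1 + a - c = 1 - (c - a) by ring]
    exact abs_one_sub_lt_one (by linarith) (by linarith)
  rw [hfirst]
  refine ⟨fun h => ⟨?_, hsecond⟩, fun h => ⟨?_, hsecond⟩⟩
  · exact abs_one_sub_add_mul_lt_one hb1 (by linarith) (one_sub_div_mem_Icc ha0 hac.le) h
  · exact (by linarith : (1 : ℝ) < 1 - b + d * (1 - a / c)).trans_le (le_abs_self _)

theorem stmt15 (a b c d : ℝ) (ha0 : 0 ≤ a) (ha1 : a ≤ 1) (hb0 : 0 ≤ b) (hb1 : b ≤ 1)
    (hac : a < c) (hc : c ≤ 1 + a) (hd1 : -(1 - b) ≤ d) (hd2 : d ≤ 1 - a) :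
    (d * (1 - a / c) < b →
      |1 - b + (c - a) * d / c| < 1 ∧ |1 + a - c| < 1) ∧
    (b < d * (1 - a / c) →
      1 < |1 - b + (c - a) * d / c| ∧ |1 + a - c| < 1) :=
  stmt15_general a b c d ha0 hb1 hac hc hd1
end

section
/- Under the conditions 0 ≤ a ≤ 1, 0 < b < d ≤ 1-a, a < c ≤ 1+a, and cd-ad-bc > 0, one has d > bc(b+2)/(4+bc-ab) and a < c(2d²-b²c)/(2d²); consequently the fixed point λ₂ = ((cd-ad-bc)/(d(c+d)), b/d) of W is attracting: both eigenvalues of the Jacobian J(λ₂) = [[1, (cd-ad-bc)/(c+d)], [-(c+d)b/d, (d-bc)/d]] have absolute value less than 1. -/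
open Filter Topology

/-- Auxiliary: a root of a real quadratic `d μ² - Tr μ + Cr` satisfying the Jury
conditions lies in the open unit disk. -/
lemma aux_root_abs_lt_one (d Tr Cr : ℝ) (hd0 : 0 < d) (μ : ℂ)
    (heq2 : (d:ℂ)*(μ*μ) - ((Tr : ℝ):ℂ)*μ + ((Cr : ℝ):ℂ) = 0)
    (hg1 : 0 < d - Tr + Cr)
    (hCd : Cr < d)
    (hgm1 : 0 < d + Tr + Cr) :
    ‖μ‖ < 1 := by
  obtain ⟨hre, him⟩ := Complex.ext_iff.mp heq2
  simp [Complex.add_re, Complex.sub_re, Complex.mul_re, Complex.mul_im,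
    Complex.add_im, Complex.sub_im, Complex.ofReal_re, Complex.ofReal_im] at hre him
  set x := μ.re
  set y := μ.im
  have habs : ‖μ‖^2 = x^2 + y^2 := by
    rw [Complex.sq_norm, Complex.normSq_apply]; ring
  by_cases hy : y = 0
  · rw [hy] at hre
    have hq : d*x^2 - Tr*x + Cr = 0 := by nlinarith [hre]
    have hx1 : x < 1 := by nlinarith [sq_nonneg (x-1), sq_nonneg (x+1), mul_pos hd0 hd0]
    have hx2 : -1 < x := by nlinarith [sq_nonneg (x-1), sq_nonneg (x+1), mul_pos hd0 hd0]
    have h5 : ‖μ‖^2 = x^2 := by rw [habs, hy]; ring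
    nlinarith [norm_nonneg μ]
  · have hx : 2*d*x = Tr := by
      have h6 : y * (2*d*x - Tr) = 0 := by nlinarith [him]
      rcases mul_eq_zero.mp h6 with h | h
      · exact absurd h hy
      · linarith
    have hsum : d*(x^2 + y^2) = Cr := by nlinarith [hre]
    have : x^2 + y^2 < 1 := by nlinarith
    nlinarith [norm_nonneg μ]

theorem stmt16 (a b c d : ℝ) (ha0 : 0 ≤ a) (ha1 : a ≤ 1) (hb0 : 0 < b) (hbd : b < d)
    (hd : d ≤ 1 - a) (hac : a < c) (hc : c ≤ 1 + a)
    (hpos : 0 < c * d - a * d - b * c) :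
    b * c * (b + 2) / (4 + b * c - a * b) < d ∧
    a < c * (2 * d ^ 2 - b ^ 2 * c) / (2 * d ^ 2) ∧
    ∀ μ ∈ spectrum ℂ
      (!![(1 : ℂ), (((c * d - a * d - b * c) / (c + d) : ℝ) : ℂ);
          ((-(c + d) * b / d : ℝ) : ℂ), (((d - b * c) / d : ℝ) : ℂ)]),
      ‖μ‖ < 1 := by
  have hd0 : 0 < d := lt_trans hb0 hbd
  have hc0 : 0 < c := lt_of_le_of_lt ha0 hac
  have hbc2 : b * c ≤ 2 * b := by nlinarith
  have h2d : b * c < 2 * d := by nlinarith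
  have hden : 0 < 4 + b * c - a * b := by nlinarith
  have hcd : (0:ℝ) < c + d := by linarith
  refine ⟨?_, ?_, ?_⟩
  · rw [div_lt_iff₀ hden]
    nlinarith [mul_pos hb0 hpos]
  · rw [lt_div_iff₀ (by positivity : (0:ℝ) < 2 * d ^ 2)]
    nlinarith [mul_pos (mul_pos hb0 hc0) (by linarith : 0 < 2*d - b*c),
      mul_pos (mul_pos two_pos hd0) hpos]
  · intro μ hμ
    have h1 := spectrum.mem_iff.mp hμ
    rw [Matrix.isUnit_iff_isUnit_det, isUnit_iff_ne_zero, not_not] at h1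
    simp [Matrix.det_fin_two, Matrix.algebraMap_matrix_apply] at h1
    have h3 : (d:ℂ) ≠ 0 := by exact_mod_cast ne_of_gt hd0
    have h2 : ((c:ℂ)+(d:ℂ)) ≠ 0 := by
      have : ((c+d : ℝ):ℂ) ≠ 0 := by exact_mod_cast ne_of_gt hcd
      push_cast at this; exact this
    have heq3 : ((c:ℂ)+d)*d * ((d:ℂ)*(μ*μ) - ((2*d - b*c : ℝ):ℂ)*μ
        + ((d - b*c + (c*d-a*d-b*c)*b : ℝ):ℂ)) = 0 := by
      push_cast
      push_cast at h1
      field_simp at h1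
      linear_combination (d:ℂ) * h1
    have heq2 : (d:ℂ)*(μ*μ) - ((2*d - b*c : ℝ):ℂ)*μ
        + ((d - b*c + (c*d-a*d-b*c)*b : ℝ):ℂ) = 0 := by
      rcases mul_eq_zero.mp heq3 with h | h
      · exact absurd h (mul_ne_zero h2 h3)
      · exact h
    apply aux_root_abs_lt_one d (2*d - b*c) (d - b*c + (c*d-a*d-b*c)*b) hd0 μ heq2
    · nlinarith [mul_pos hpos hb0]
    · nlinarith [mul_pos (mul_pos hb0 hb0) hc0,
        mul_nonneg (mul_nonneg hb0.le hc0.le) (by linarith : (0:ℝ) ≤ 1 - d),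
        mul_nonneg (mul_nonneg ha0 hb0.le) hd0.le]
    · nlinarith [mul_pos hpos hb0]
end
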